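/- If H is a graph with 2 ≤ n(H) ≤ t, then γ_r(K_t □ H) = γ_s(K_t □ H) = n(H). -/

import Mathlib

open Finset

variable {V : Type*}

/-- `S` is a dominating set of `G`. -/
def Dominating (G : SimpleGraph V) (S : Set V) : Prop :=
  ∀ v, v ∉ S → ∃ u ∈ S, G.Adj u v

/-- `S` is a secure dominating set of `G`. -/
def SecureDominating (G : SimpleGraph V) (S : Set V) : Prop :=
  Dominating G S ∧ ∀ v, v ∉ S → ∃ u ∈ S, G.Adj u v ∧ Dominating G ((S \ {u}) ∪ {v})

/-- The domination number `γ(G)`. -/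
noncomputable def domNum (G : SimpleGraph V) : ℕ :=
  sInf {n | ∃ S : Set V, Dominating G S ∧ S.ncard = n}

/-- The secure domination number `γ_s(G)`. -/
noncomputable def secDomNum (G : SimpleGraph V) : ℕ :=
  sInf {n | ∃ S : Set V, SecureDominating G S ∧ S.ncard = n}

/-- `v` is undefended with respect to the guard function `f`. -/
def Undefended (G : SimpleGraph V) (f : V → ℕ) (v : V) : Prop :=
  f v = 0 ∧ ∀ u, G.Adj u v → f u = 0

/-- `f` is a weak Roman dominating function on `G`. -/
def IsWRDF [DecidableEq V] (G : SimpleGraph V) (f : V → ℕ) : Prop :=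
  (∀ v, f v ≤ 2) ∧ ∀ v, f v = 0 → ∃ u, G.Adj u v ∧ 1 ≤ f u ∧
    ∀ w, ¬ Undefended G (Function.update (Function.update f u (f u - 1)) v 1) w

/-- The weak Roman domination number `γ_r(G)`. -/
noncomputable def weakRomanNum [Fintype V] [DecidableEq V] (G : SimpleGraph V) : ℕ :=
  sInf {n | ∃ f : V → ℕ, IsWRDF G f ∧ ∑ v, f v = n}

/-!
The transversals `{(g w, w) | w ∈ W}` of `K_t □ H`, one vertex in each copy of `K_t`, are secure
dominating: a guard moving inside its copy of `K_t` leaves a transversal again. Conversely, a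
dominating set either meets every copy of `K_t`, or misses one, and then each vertex of that copy
is dominated from its own copy of `H`, so it meets every copy of `H`; hence it has at least
`min t n(H) = n(H)` vertices. This squeezes `γ ≤ γ_r ≤ γ_s`, where the first inequality holds
because the support of a weak Roman dominating function dominates, and the second because the
indicator of a secure dominating set is a weak Roman dominating function.
-/

open SimpleGraph

section Domination

variable {G : SimpleGraph V}

lemma dominating_univ : Dominating G Set.univ :=
  fun _ hv => absurd (Set.mem_univ _) hv

lemma le_domNum {n : ℕ} (h : ∀ S, Dominating G S → n ≤ S.ncard) : n ≤ domNum G :=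
  le_csInf ⟨_, Set.univ, dominating_univ, rfl⟩ (by rintro _ ⟨S, hS, rfl⟩; exact h S hS)

lemma secDomNum_le_ncard {S : Set V} (hS : SecureDominating G S) : secDomNum G ≤ S.ncard :=
  Nat.sInf_le ⟨S, hS, rfl⟩

lemma Dominating.not_undefended_indicator {S : Set V} (hS : Dominating G S) (v : V) :
    ¬ Undefended G (S.indicator 1) v := by
  rintro ⟨hv, hnbr⟩
  obtain ⟨u, huS, hadj⟩ := hS v (by simpa using hv)
  simpa [huS] using hnbr u hadj

lemma secureDominating_univ : SecureDominating G Set.univ :=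
  ⟨dominating_univ, fun _ hv => absurd (Set.mem_univ _) hv⟩

section Finite

variable [Fintype V]

lemma sum_indicator_one (S : Set V) : ∑ v, S.indicator (1 : V → ℕ) v = S.ncard := by
  classical
  simp [Set.indicator_apply, Finset.sum_boole, Set.ncard_eq_toFinset_card']

lemma ncard_support_le_sum (f : V → ℕ) : (Function.support f).ncard ≤ ∑ v, f v := by
  rw [← sum_indicator_one]
  refine Finset.sum_le_sum fun v _ => ?_
  by_cases hv : f v = 0 <;> simp [hv, Nat.one_le_iff_ne_zero]

end Finite

variable [DecidableEq V]

lemma IsWRDF.dominating_support {f : V → ℕ} (hf : IsWRDF G f) :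
    Dominating G (Function.support f) := by
  intro v hv
  obtain ⟨u, hadj, hu, -⟩ := hf.2 v (Function.notMem_support.1 hv)
  exact ⟨u, Nat.one_le_iff_ne_zero.1 hu, hadj⟩

/-- Moving the guard of `u` to `v` turns the indicator of `S` into that of `S \ {u} ∪ {v}`. -/
lemma SecureDominating.isWRDF_indicator {S : Set V} (hS : SecureDominating G S) :
    IsWRDF G (S.indicator 1) := by
  refine ⟨fun v => (Set.indicator_le_self' (by simp) v).trans (by simp), fun v hv => ?_⟩
  obtain ⟨u, huS, hadj, hdom⟩ := hS.2 v (by simpa using hv)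
  have huv : u ≠ v := hadj.ne
  refine ⟨u, hadj, by simp [huS], fun w => ?_⟩
  have hmove : Function.update (Function.update (S.indicator 1) u (S.indicator 1 u - 1)) v 1 =
      ((S \ {u}) ∪ {v}).indicator 1 := by
    ext x
    rcases eq_or_ne x v with rfl | hxv
    · simp
    rcases eq_or_ne x u with rfl | hxu
    · simp [huv, huS]
    · rw [Function.update_of_ne hxv, Function.update_of_ne hxu]
      exact Set.indicator_eq_indicator (by simp [hxv, hxu]) rfl
  rw [hmove]
  exact hdom.not_undefended_indicator w

variable [Fintype V]

lemma domNum_le_weakRomanNum (G : SimpleGraph V) : domNum G ≤ weakRomanNum G := by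
  have hne : {n | ∃ f : V → ℕ, IsWRDF G f ∧ ∑ v, f v = n}.Nonempty :=
    ⟨_, Set.univ.indicator 1, secureDominating_univ.isWRDF_indicator, rfl⟩
  obtain ⟨f, hf, hsum⟩ := Nat.sInf_mem hne
  calc domNum G ≤ (Function.support f).ncard := Nat.sInf_le ⟨_, hf.dominating_support, rfl⟩
    _ ≤ ∑ v, f v := ncard_support_le_sum f
    _ = weakRomanNum G := hsum

lemma weakRomanNum_le_secDomNum (G : SimpleGraph V) : weakRomanNum G ≤ secDomNum G := by
  have hne : {n | ∃ S : Set V, SecureDominating G S ∧ S.ncard = n}.Nonempty :=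
    ⟨_, Set.univ, secureDominating_univ, rfl⟩
  obtain ⟨S, hS, hcard⟩ := Nat.sInf_mem hne
  calc weakRomanNum G ≤ ∑ v, S.indicator 1 v := Nat.sInf_le ⟨_, hS.isWRDF_indicator, rfl⟩
    _ = secDomNum G := (sum_indicator_one S).trans hcard

end Domination

lemma Set.card_le_ncard_of_injective_of_mem {β γ : Type*} [Finite γ] {S : Set γ} {f : β → γ}
    (hf : Function.Injective f) (hS : ∀ b, f b ∈ S) : Nat.card β ≤ S.ncard :=
  (Nat.card_le_card_of_injective _ (hf.codRestrict hS)).trans_eq (Nat.card_coe_set_eq S)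

section CompleteBoxProd

variable {α W : Type*} {H : SimpleGraph W}

lemma completeGraph_boxProd_adj_of_ne {i j : α} (w : W) (h : i ≠ j) :
    ((completeGraph α).boxProd H).Adj (i, w) (j, w) :=
  boxProd_adj_left.2 h

def transversal (g : W → α) : Set (α × W) := Set.range fun w => (g w, w)

@[simp]
lemma mem_transversal {g : W → α} {i : α} {w : W} : (i, w) ∈ transversal g ↔ g w = i := by
  simp [transversal]

lemma ncard_transversal [Finite W] (g : W → α) : (transversal g).ncard = Nat.card W :=
  Set.ncard_range_of_injective fun _ _ h => congrArg Prod.snd h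

lemma dominating_transversal (g : W → α) :
    Dominating ((completeGraph α).boxProd H) (transversal g) := by
  rintro ⟨i, w⟩ hv
  exact ⟨(g w, w), mem_transversal.2 rfl,
    completeGraph_boxProd_adj_of_ne w fun h => hv (mem_transversal.2 h)⟩

/-- Moving the guard of column `w` to `(i, w)` yields the transversal of `update g w i`. -/
lemma secureDominating_transversal (g : W → α) :
    SecureDominating ((completeGraph α).boxProd H) (transversal g) := by
  classical
  refine ⟨dominating_transversal g, ?_⟩
  rintro ⟨i, w⟩ hv
  refine ⟨(g w, w), mem_transversal.2 rfl,
    completeGraph_boxProd_adj_of_ne w fun h => hv (mem_transversal.2 h), ?_⟩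
  convert dominating_transversal (H := H) (Function.update g w i) using 1
  ext ⟨j, w'⟩
  rw [mem_transversal]
  rcases eq_or_ne w' w with rfl | hw
  · simp [eq_comm]
  · simp [hw]

lemma min_card_le_ncard_of_dominating [Finite α] [Finite W] {S : Set (α × W)}
    (hS : Dominating ((completeGraph α).boxProd H) S) :
    min (Nat.card α) (Nat.card W) ≤ S.ncard := by
  by_cases hcols : ∀ w, ∃ i, (i, w) ∈ S
  · choose i hi using hcols
    exact min_le_of_right_le <| Set.card_le_ncard_of_injective_of_mem
      (fun _ _ h => congrArg Prod.snd h) hi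
  · obtain ⟨w, hw⟩ : ∃ w, ∀ i, (i, w) ∉ S := by simpa using hcols
    have hrows : ∀ i, ∃ w', (i, w') ∈ S := by
      intro i
      obtain ⟨⟨j, w'⟩, hS', hadj⟩ := hS (i, w) (hw i)
      rcases boxProd_adj.1 hadj with ⟨-, rfl⟩ | ⟨-, rfl⟩
      · exact absurd hS' (hw j)
      · exact ⟨w', hS'⟩
    choose w' hw' using hrows
    exact min_le_of_left_le <| Set.card_le_ncard_of_injective_of_mem
      (fun _ _ h => congrArg Prod.fst h) hw'

end CompleteBoxProd

theorem stmt18_general {W : Type*} [Fintype W] [DecidableEq W] (t : ℕ) (H : SimpleGraph W)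
    (ht : Fintype.card W ≤ t) :
    weakRomanNum ((SimpleGraph.completeGraph (Fin t)).boxProd H) = Fintype.card W ∧
      secDomNum ((SimpleGraph.completeGraph (Fin t)).boxProd H) = Fintype.card W := by
  set G := (completeGraph (Fin t)).boxProd H
  obtain ⟨g⟩ : Nonempty (W ↪ Fin t) := Function.Embedding.nonempty_of_card_le (by simpa using ht)
  have hlower : Fintype.card W ≤ domNum G := le_domNum fun S hS => by
    simpa [ht] using min_card_le_ncard_of_dominating hS
  have hupper : secDomNum G ≤ Fintype.card W := by
    simpa [ncard_transversal] using secDomNum_le_ncard (secureDominating_transversal (H := H) g)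
  have hdom_le := domNum_le_weakRomanNum G
  have hwr_le := weakRomanNum_le_secDomNum G
  omega

theorem stmt18 {W : Type*} [Fintype W] [DecidableEq W] (t : ℕ) (H : SimpleGraph W)
    (h2 : 2 ≤ Fintype.card W) (ht : Fintype.card W ≤ t) :
    weakRomanNum ((SimpleGraph.completeGraph (Fin t)).boxProd H) = Fintype.card W ∧
      secDomNum ((SimpleGraph.completeGraph (Fin t)).boxProd H) = Fintype.card W :=
  stmt18_general t H ht
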